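/- Fix a team X ⊆ (ι → M), a tuple x : Fin m → ι, and a list ks = [k₁, …, kₙ] of natural numbers. Define by mutual recursion on the list, for predicates R : List (Fin m → M) → Prop: Ssat X x [] R := R []; Ssat X x (k :: ks') R := ∃ σ : Fin k → (ι → M), (∀ i, σ i ∈ X) ∧ Psat X x ks' (fun l => R (List.ofFn (fun i => (σ i) ∘ x) ++ l)); Psat X x [] R := R []; Psat X x (k :: ks') R := ∀ σ : Fin k → (ι → M), (∀ i, σ i ∈ X) → Ssat X x ks' (fun l => R (List.ofFn (fun i => (σ i) ∘ x) ++ l)). Define the atoms: X ⊨ Σ^R_{ks}(x) iff X = ∅ ∨ Ssat X x ks R, and X ⊨ Π^R_{ks}(x) iff X = ∅ ∨ Psat X x ks R. Then for every team X: (X = ∅ ∨ ¬(X ⊨ Σ^R_{ks}(x))) ↔ X ⊨ Π^{R'}_{ks}(x), where R' l := ¬ R l is the complement of R; and symmetrically (X = ∅ ∨ ¬(X ⊨ Π^R_{ks}(x))) ↔ X ⊨ Σ^{R'}_{ks}(x). (The weak classical negation of a Σ atom is the Π atom of the complement relation, and vice versa.) -/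
import Mathlib


mutual
  /-- `Ssat X x ks R`: alternating block quantification starting with an existential
  block of `ks.head` assignments from `X`. -/
  def Ssat {ι M : Type*} (X : Set (ι → M)) {m : ℕ} (x : Fin m → ι) :
      List ℕ → (List (Fin m → M) → Prop) → Prop
    | [], R => R []
    | (k :: ks), R => ∃ σ : Fin k → (ι → M), (∀ i, σ i ∈ X) ∧
        Psat X x ks (fun l => R (List.ofFn (fun i => (σ i) ∘ x) ++ l))

  /-- `Psat X x ks R`: alternating block quantification starting with a universal
  block of `ks.head` assignments from `X`. -/
  def Psat {ι M : Type*} (X : Set (ι → M)) {m : ℕ} (x : Fin m → ι) :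
      List ℕ → (List (Fin m → M) → Prop) → Prop
    | [], R => R []
    | (k :: ks), R => ∀ σ : Fin k → (ι → M), (∀ i, σ i ∈ X) →
        Ssat X x ks (fun l => R (List.ofFn (fun i => (σ i) ∘ x) ++ l))
end

lemma deMorgan {ι M : Type*} (X : Set (ι → M)) {m : ℕ} (x : Fin m → ι) :
    ∀ (ks : List ℕ) (R : List (Fin m → M) → Prop),
      (¬ Ssat X x ks R ↔ Psat X x ks (fun l => ¬ R l)) ∧
      (¬ Psat X x ks R ↔ Ssat X x ks (fun l => ¬ R l)) := by
  intro ks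
  induction ks with
  | nil => intro R; simp [Ssat, Psat]
  | cons k ks ih =>
    intro R
    constructor
    · simp only [Ssat, Psat, not_exists, not_and]
      exact forall_congr' fun σ => imp_congr Iff.rfl ((ih _).2)
    · simp only [Ssat, Psat]
      push_neg
      exact exists_congr fun σ => and_congr Iff.rfl ((ih _).1)

/-- the weak classical negation of a `Σ` atom is the `Π` atom of the
complement relation, and vice versa. -/
theorem weak_negation_sigma_pi
    {ι M : Type*} [Nonempty M] {m : ℕ} (x : Fin m → ι)
    (ks : List ℕ) (R : List (Fin m → M) → Prop) (X : Set (ι → M)) :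
    ((X = ∅ ∨ ¬ (X = ∅ ∨ Ssat X x ks R)) ↔ (X = ∅ ∨ Psat X x ks (fun l => ¬ R l))) ∧
    ((X = ∅ ∨ ¬ (X = ∅ ∨ Psat X x ks R)) ↔ (X = ∅ ∨ Ssat X x ks (fun l => ¬ R l))) := by
  rcases eq_or_ne X ∅ with he | he
  · constructor <;> exact ⟨fun _ => Or.inl he, fun _ => Or.inl he⟩
  · constructor
    · constructor
      · rintro (h | h)
        · exact absurd h he
        · exact Or.inr ((deMorgan X x ks R).1.mp fun hs => h (Or.inr hs))
      · rintro (h | h)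
        · exact absurd h he
        · exact Or.inr fun h' => h'.elim he ((deMorgan X x ks R).1.mpr h)
    · constructor
      · rintro (h | h)
        · exact absurd h he
        · exact Or.inr ((deMorgan X x ks R).2.mp fun hs => h (Or.inr hs))
      · rintro (h | h)
        · exact absurd h he
        · exact Or.inr fun h' => h'.elim he ((deMorgan X x ks R).2.mpr h)
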